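/- The interlace polynomial is multiplicative over disjoint unions: if G is the disjoint union of graphs G1 and G2, then q(G,x) = q(G1,x)·q(G2,x). -/

import Mathlib

/-!
Induct on the total number of vertices. If `G1` has an edge `uv`, apply the recursion at `uv`
inside `G1 ⊔ G2`: deleting or locally complementing at a vertex of `G1` does not touch `G2`, so
both terms are again disjoint unions with one vertex fewer, factor by induction, and add up to
`q G1 * q G2`. An edge of `G2` is handled symmetrically, and for two edgeless graphs the claim
is `x^(m+n) = x^m x^n`.

Since `q` is an arbitrary function on each vertex type, matching the vertex types that arise
(`{w // w ≠ inl u}` versus `{w // w ≠ u} ⊕ W`) needs that the recursion alone forces `q` to be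
invariant under graph isomorphism.
-/

/-- Local complementation at a vertex `v`: toggle all edges between
distinct neighbours of `v`. -/
def localComp {V : Type} (G : SimpleGraph V) (v : V) : SimpleGraph V where
  Adj x y := x ≠ y ∧ Xor' (G.Adj x y) (G.Adj v x ∧ G.Adj v y)
  symm := by
    constructor
    intro x y ⟨hxy, h⟩
    refine ⟨hxy.symm, ?_⟩
    rw [G.adj_comm y x, and_comm]
    exact h
  loopless := ⟨fun x h => h.1 rfl⟩

/-- Edge local complementation on the edge `{u,v}`: `G*u*v*u`. -/
def elc {V : Type} (G : SimpleGraph V) (u v : V) : SimpleGraph V :=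
  localComp (localComp (localComp G u) v) u

/-- Deletion of a vertex `u`: the induced subgraph on the other vertices. -/
def delVert {V : Type} (G : SimpleGraph V) (u : V) :
    SimpleGraph {w : V // w ≠ u} :=
  G.induce {w : V | w ≠ u}

/-- The disjoint union of two graphs. -/
def disjUnion {V W : Type} (G1 : SimpleGraph V) (G2 : SimpleGraph W) :
    SimpleGraph (V ⊕ W) where
  Adj x y := match x, y with
    | Sum.inl a, Sum.inl b => G1.Adj a b
    | Sum.inr a, Sum.inr b => G2.Adj a b
    | _, _ => False
  symm := by
    constructor
    rintro (a | a) (b | b) h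
    · exact G1.adj_symm h
    · exact h.elim
    · exact h.elim
    · exact G2.adj_symm h
  loopless := by
    constructor
    rintro (a | a) h
    · exact G1.irrefl h
    · exact G2.irrefl h

@[simp]
lemma localComp_adj {V : Type} (G : SimpleGraph V) (v x y : V) :
    (localComp G v).Adj x y ↔ x ≠ y ∧ Xor (G.Adj x y) (G.Adj v x ∧ G.Adj v y) :=
  Iff.rfl

namespace SimpleGraph.Iso

variable {V V' : Type} {G : SimpleGraph V} {G' : SimpleGraph V'}

def localComp (e : G ≃g G') (u : V) : _root_.localComp G u ≃g _root_.localComp G' (e u) where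
  toEquiv := e.toEquiv
  map_rel_iff' {x y} := by simp [e.map_adj_iff]

def elc (e : G ≃g G') (u v : V) : _root_.elc G u v ≃g _root_.elc G' (e u) (e v) :=
  ((e.localComp u).localComp v).localComp u

def delVert (e : G ≃g G') (u : V) : _root_.delVert G u ≃g _root_.delVert G' (e u) where
  toEquiv := e.toEquiv.subtypeEquiv fun _ => e.injective.ne_iff.symm
  map_rel_iff' := e.map_adj_iff

end SimpleGraph.Iso

section DisjUnion

variable {V W : Type} (G1 : SimpleGraph V) (G2 : SimpleGraph W)

lemma disjUnion_bot : disjUnion (⊥ : SimpleGraph V) (⊥ : SimpleGraph W) = ⊥ := by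
  ext (a | a) (b | b) <;> simp [disjUnion]

def disjUnionComm : disjUnion G1 G2 ≃g disjUnion G2 G1 where
  toEquiv := Equiv.sumComm V W
  map_rel_iff' {x y} := by cases x <;> cases y <;> exact Iff.rfl

lemma localComp_disjUnion_inl (u : V) :
    localComp (disjUnion G1 G2) (.inl u) = disjUnion (localComp G1 u) G2 := by
  ext (a | a) (b | b) <;> simp [disjUnion, xor_def]
  exact fun h => G2.ne_of_adj h

lemma elc_disjUnion_inl (u v : V) :
    elc (disjUnion G1 G2) (.inl u) (.inl v) = disjUnion (elc G1 u v) G2 := by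
  simp only [elc, localComp_disjUnion_inl]

def delVertDisjUnionInl (u : V) :
    delVert (disjUnion G1 G2) (.inl u) ≃g disjUnion (delVert G1 u) G2 where
  toEquiv := Equiv.subtypeSum.trans <| Equiv.sumCongr
    (Equiv.subtypeEquivRight fun _ => Sum.inl_injective.ne_iff)
    (Equiv.subtypeUnivEquiv fun _ => Sum.inr_ne_inl)
  map_rel_iff' {x y} := by
    obtain ⟨a | a, ha⟩ := x <;> obtain ⟨b | b, hb⟩ := y <;> exact Iff.rfl

end DisjUnion

lemma eq_bot_of_not_adj {V : Type} {G : SimpleGraph V} (h : ¬∃ u v, G.Adj u v) : G = ⊥ := by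
  ext u v
  simpa using fun huv => h ⟨u, v, huv⟩

lemma card_subtype_ne_lt {V : Type} [Fintype V] [DecidableEq V] (u : V) :
    Fintype.card {w : V // w ≠ u} < Fintype.card V :=
  Fintype.card_subtype_lt (not_not.2 rfl)

structure IsInterlacePoly
    (q : ∀ (W : Type) [Fintype W] [DecidableEq W], SimpleGraph W → Polynomial ℤ) : Prop where
  bot_eq : ∀ (W : Type) [Fintype W] [DecidableEq W], q W ⊥ = Polynomial.X ^ Fintype.card W
  eq_add_of_adj : ∀ (W : Type) [Fintype W] [DecidableEq W] (G : SimpleGraph W) (u v : W),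
    G.Adj u v →
      q W G = q {w : W // w ≠ u} (delVert G u) + q {w : W // w ≠ u} (delVert (elc G u v) u)

namespace IsInterlacePoly

variable {q : ∀ (W : Type) [Fintype W] [DecidableEq W], SimpleGraph W → Polynomial ℤ}

theorem eq_of_iso (hq : IsInterlacePoly q) {V V' : Type} [Fintype V] [DecidableEq V]
    [Fintype V'] [DecidableEq V'] {G : SimpleGraph V} {G' : SimpleGraph V'} (e : G ≃g G') :
    q V G = q V' G' := by
  induction h : Fintype.card V using Nat.strong_induction_on generalizing V V' G G' with
  | _ n ih =>
    by_cases hG : ∃ u v, G.Adj u v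
    · obtain ⟨u, v, huv⟩ := hG
      have hlt : Fintype.card {w : V // w ≠ u} < n := h ▸ card_subtype_ne_lt u
      rw [hq.eq_add_of_adj V G u v huv, hq.eq_add_of_adj V' G' (e u) (e v) (e.map_adj_iff.2 huv),
        ih _ hlt (e.delVert u) rfl, ih _ hlt ((e.elc u v).delVert u) rfl]
      rfl
    · have hG' : ¬∃ u v, G'.Adj u v := fun ⟨u, v, huv⟩ =>
        hG ⟨e.symm u, e.symm v, e.symm.map_adj_iff.2 huv⟩
      rw [eq_bot_of_not_adj hG, eq_bot_of_not_adj hG', hq.bot_eq, hq.bot_eq,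
        Fintype.card_congr e.toEquiv]

theorem disjUnion_eq_mul_of_adj (hq : IsInterlacePoly q) {V W : Type} [Fintype V] [DecidableEq V]
    [Fintype W] [DecidableEq W] {G1 : SimpleGraph V} (G2 : SimpleGraph W) {u v : V}
    (huv : G1.Adj u v)
    (hdel : q _ (disjUnion (delVert G1 u) G2) = q _ (delVert G1 u) * q W G2)
    (hdel_elc : q _ (disjUnion (delVert (elc G1 u v) u) G2) =
      q _ (delVert (elc G1 u v) u) * q W G2) :
    q (V ⊕ W) (disjUnion G1 G2) = q V G1 * q W G2 := by
  have huv' : (disjUnion G1 G2).Adj (.inl u) (.inl v) := huv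
  rw [hq.eq_add_of_adj _ _ _ _ huv', hq.eq_add_of_adj V G1 u v huv,
    hq.eq_of_iso (delVertDisjUnionInl G1 G2 u), elc_disjUnion_inl,
    hq.eq_of_iso (delVertDisjUnionInl _ G2 u), hdel, hdel_elc, add_mul]

theorem disjUnion_eq_mul (hq : IsInterlacePoly q) {V W : Type} [Fintype V] [DecidableEq V]
    [Fintype W] [DecidableEq W] (G1 : SimpleGraph V) (G2 : SimpleGraph W) :
    q (V ⊕ W) (disjUnion G1 G2) = q V G1 * q W G2 := by
  induction h : Fintype.card V + Fintype.card W using Nat.strong_induction_on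
    generalizing V W G1 G2 with
  | _ n ih =>
    by_cases h1 : ∃ u v, G1.Adj u v
    · obtain ⟨u, v, huv⟩ := h1
      have hlt : Fintype.card {w : V // w ≠ u} + Fintype.card W < n := by
        have := card_subtype_ne_lt u; omega
      exact hq.disjUnion_eq_mul_of_adj G2 huv (ih _ hlt _ _ rfl) (ih _ hlt _ _ rfl)
    by_cases h2 : ∃ u v, G2.Adj u v
    · obtain ⟨u, v, huv⟩ := h2
      have hlt : Fintype.card {w : W // w ≠ u} + Fintype.card V < n := by
        have := card_subtype_ne_lt u; omega
      rw [hq.eq_of_iso (disjUnionComm G1 G2), mul_comm,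
        hq.disjUnion_eq_mul_of_adj G1 huv (ih _ hlt _ _ rfl) (ih _ hlt _ _ rfl)]
    rw [eq_bot_of_not_adj h1, eq_bot_of_not_adj h2, disjUnion_bot, hq.bot_eq, hq.bot_eq,
      hq.bot_eq, Fintype.card_sum, pow_add]

end IsInterlacePoly

/-- The interlace polynomial is multiplicative over disjoint unions:
`q(G1 ⊔ G2, x) = q(G1,x) · q(G2,x)`. -/
theorem interlace_q_disjUnion
    (q : ∀ (W : Type) [Fintype W] [DecidableEq W], SimpleGraph W → Polynomial ℤ)
    (hbase : ∀ (W : Type) [Fintype W] [DecidableEq W],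
      q W (⊥ : SimpleGraph W) = Polynomial.X ^ (Fintype.card W))
    (hrec : ∀ (W : Type) [Fintype W] [DecidableEq W] (G : SimpleGraph W)
      (u v : W), G.Adj u v →
      q W G = q {w : W // w ≠ u} (delVert G u) + q {w : W // w ≠ u} (delVert (elc G u v) u))
    {V W : Type} [Fintype V] [DecidableEq V] [Fintype W] [DecidableEq W]
    (G1 : SimpleGraph V) (G2 : SimpleGraph W) :
    q (V ⊕ W) (disjUnion G1 G2) = q V G1 * q W G2 :=
  IsInterlacePoly.disjUnion_eq_mul ⟨hbase, hrec⟩ G1 G2
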